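/- Let μ be a probability measure on ℝ^d with smooth, compactly supported density q, and let x ∈ ℝ^d with q(x) > 0. Let Σ_σ(x) denote the covariance matrix of the posterior ν_{σ,x}. Then the rescaled posterior covariance converges to the identity: σ^{−2} Σ_σ(x) → I_d as σ → 0⁺. -/

import Mathlib

open MeasureTheory Filter Real

/-- The isotropic Gaussian density `φ_σ(w) = (2πσ²)^{-d/2} exp(-‖w‖²/(2σ²))` on `ℝ^d`. -/
noncomputable def gaussDensity (d : ℕ) (σ : ℝ) (w : EuclideanSpace ℝ (Fin d)) : ℝ :=
  (2 * π * σ ^ 2) ^ (-(d : ℝ) / 2) * Real.exp (-‖w‖ ^ 2 / (2 * σ ^ 2))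

/-- The posterior law `ν_{σ,x}(A) = (∫_A φ_σ(x - z) dμ(z)) / p_σ(x)`. -/
noncomputable def posterior {d : ℕ} (μ : Measure (EuclideanSpace ℝ (Fin d))) (σ : ℝ)
    (x : EuclideanSpace ℝ (Fin d)) : Measure (EuclideanSpace ℝ (Fin d)) :=
  (ENNReal.ofReal (∫ z, gaussDensity d σ (x - z) ∂μ))⁻¹ •
    μ.withDensity fun z => ENNReal.ofReal (gaussDensity d σ (x - z))

open scoped NNReal ENNReal

namespace PostCov


noncomputable def g1 (t : ℝ) : ℝ := Real.exp (-t ^ 2 / 2)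

lemma g1_pos (t : ℝ) : 0 < g1 t := Real.exp_pos _

lemma continuous_g1 : Continuous g1 := by
  unfold g1; fun_prop

lemma integrable_g1 : Integrable g1 := by
  have := integrable_exp_neg_mul_sq (b := (1/2 : ℝ)) (by norm_num)
  convert this using 2 with t
  unfold g1; congr 1; ring

lemma exp_quarter_bound (u : ℝ) : u ≤ 4 * Real.exp (u / 4) := by
  have h := Real.add_one_le_exp (u / 4)
  nlinarith [Real.exp_pos (u/4)]

lemma sq_mul_g1_le (t : ℝ) : t ^ 2 * g1 t ≤ 4 * Real.exp (-t ^ 2 / 4) := by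
  have h1 : t ^ 2 ≤ 4 * Real.exp (t ^ 2 / 4) := exp_quarter_bound _
  have h2 : (0:ℝ) < Real.exp (-t^2/2) := Real.exp_pos _
  calc t ^ 2 * g1 t ≤ (4 * Real.exp (t ^ 2 / 4)) * Real.exp (-t^2/2) := by
        unfold g1; exact mul_le_mul_of_nonneg_right h1 h2.le
    _ = 4 * Real.exp (-t ^ 2 / 4) := by
        rw [mul_assoc, ← Real.exp_add]; ring_nf

lemma integrable_exp_neg_sq_quarter : Integrable (fun t : ℝ => Real.exp (-t ^ 2 / 4)) := by
  have := integrable_exp_neg_mul_sq (b := (1/4 : ℝ)) (by norm_num)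
  convert this using 2 with t
  congr 1; ring

lemma integrable_sq_mul_g1 : Integrable (fun t : ℝ => t ^ 2 * g1 t) := by
  apply Integrable.mono' (integrable_exp_neg_sq_quarter.const_mul 4)
  · exact (Continuous.mul (by fun_prop) continuous_g1).aestronglyMeasurable
  · filter_upwards with t
    have h0 : 0 ≤ t ^ 2 * g1 t := mul_nonneg (sq_nonneg t) (g1_pos t).le
    rw [Real.norm_eq_abs, abs_of_nonneg h0]
    exact sq_mul_g1_le t

lemma integrable_mul_g1 : Integrable (fun t : ℝ => t * g1 t) := by
  apply Integrable.mono' (integrable_g1.add integrable_sq_mul_g1)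
  · exact (Continuous.mul continuous_id continuous_g1).aestronglyMeasurable
  · filter_upwards with t
    rw [Real.norm_eq_abs, abs_mul, abs_of_nonneg (g1_pos t).le]
    simp only [Pi.add_apply]
    have : |t| ≤ 1 + t ^ 2 := by nlinarith [abs_nonneg t, sq_abs t]
    nlinarith [g1_pos t, abs_nonneg t]

lemma int_mul_g1 : ∫ t : ℝ, t * g1 t = 0 := by
  have h := integral_neg_eq_self (fun t : ℝ => t * g1 t) volume
  have h2 : (∫ t : ℝ, (-t) * g1 (-t)) = - ∫ t : ℝ, t * g1 t := by
    rw [← integral_neg]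
    congr 1 with t
    unfold g1
    ring_nf
  rw [h2] at h
  linarith

lemma abs_le_exp_quarter (t : ℝ) : |t| ≤ Real.exp (t ^ 2 / 4) := by
  have h := Real.add_one_le_exp (t ^ 2 / 4)
  nlinarith [sq_abs t, abs_nonneg t, sq_nonneg (|t| - 2)]

lemma tendsto_neg_g1_atTop : Tendsto (fun t : ℝ => -t * g1 t) atTop (nhds 0) := by
  apply squeeze_zero_norm (a := fun t : ℝ => Real.exp (-(t ^ 2 / 4)))
  · intro t
    rw [Real.norm_eq_abs, abs_mul, abs_neg, abs_of_nonneg (g1_pos t).le]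
    calc |t| * g1 t ≤ Real.exp (t ^ 2 / 4) * Real.exp (-t ^ 2 / 2) :=
          mul_le_mul_of_nonneg_right (abs_le_exp_quarter t) (g1_pos t).le
      _ = Real.exp (-(t ^ 2 / 4)) := by rw [← Real.exp_add]; ring_nf
  · apply Real.tendsto_exp_atBot.comp
    apply tendsto_neg_atTop_atBot.comp
    exact (tendsto_pow_atTop two_ne_zero).atTop_div_const (by norm_num)

lemma tendsto_neg_g1_atBot : Tendsto (fun t : ℝ => -t * g1 t) atBot (nhds 0) := by
  apply squeeze_zero_norm (a := fun t : ℝ => Real.exp (-(t ^ 2 / 4)))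
  · intro t
    rw [Real.norm_eq_abs, abs_mul, abs_neg, abs_of_nonneg (g1_pos t).le]
    calc |t| * g1 t ≤ Real.exp (t ^ 2 / 4) * Real.exp (-t ^ 2 / 2) :=
          mul_le_mul_of_nonneg_right (abs_le_exp_quarter t) (g1_pos t).le
      _ = Real.exp (-(t ^ 2 / 4)) := by rw [← Real.exp_add]; ring_nf
  · apply Real.tendsto_exp_atBot.comp
    apply tendsto_neg_atTop_atBot.comp
    apply Tendsto.atTop_div_const (by norm_num)
    have := (tendsto_pow_atTop (two_ne_zero)).comp tendsto_neg_atBot_atTop (α := ℝ)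
    simpa [Function.comp_def, neg_sq] using this

lemma int_sq_mul_g1 : ∫ t : ℝ, t ^ 2 * g1 t = ∫ t : ℝ, g1 t := by
  have hderiv : ∀ t : ℝ, HasDerivAt (fun t : ℝ => -t * g1 t)
      (t ^ 2 * g1 t - g1 t) t := by
    intro t
    have h1 : HasDerivAt (fun t : ℝ => -t ^ 2 / 2) (-t) t := by
      have := ((hasDerivAt_pow 2 t).neg).div_const 2
      refine this.congr_deriv ?_
      simp; ring
    have h2 : HasDerivAt g1 (Real.exp (-t ^ 2 / 2) * (-t)) t := h1.exp
    have h3 := ((hasDerivAt_id t).neg).mul h2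
    refine h3.congr_deriv ?_
    unfold g1
    simp
    ring
  have hint : Integrable (fun t : ℝ => t ^ 2 * g1 t - g1 t) :=
    integrable_sq_mul_g1.sub integrable_g1
  have h := integral_of_hasDerivAt_of_tendsto hderiv hint
    tendsto_neg_g1_atBot tendsto_neg_g1_atTop
  rw [sub_zero] at h
  rw [integral_sub integrable_sq_mul_g1 integrable_g1] at h
  linarith

lemma int_g1_pos : 0 < ∫ t : ℝ, g1 t := by
  have h : ∫ t : ℝ, g1 t = Real.sqrt (π / (1/2)) := by
    rw [← integral_gaussian (1/2 : ℝ)]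
    congr 1 with t
    unfold g1; congr 1; ring
  rw [h]
  apply Real.sqrt_pos.2
  positivity


variable {d : ℕ}

lemma norm_sq_eq (w : EuclideanSpace ℝ (Fin d)) : ‖w‖ ^ 2 = ∑ i, (w i) ^ 2 := by
  rw [EuclideanSpace.norm_eq, Real.sq_sqrt]
  · simp [sq_abs]
  · positivity

lemma exp_neg_norm_sq_div_eq_prod (c : ℝ) (w : EuclideanSpace ℝ (Fin d)) :
    Real.exp (-‖w‖ ^ 2 / c) = ∏ i, Real.exp (-(w i) ^ 2 / c) := by
  rw [← Real.exp_sum, norm_sq_eq]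
  congr 1
  rw [← Finset.sum_div, ← Finset.sum_neg_distrib]

lemma integral_euclidean_prod (f : Fin d → ℝ → ℝ) :
    ∫ w : EuclideanSpace ℝ (Fin d), ∏ i, f i (w i) = ∏ i, ∫ t : ℝ, f i t := by
  have mp := (EuclideanSpace.volume_preserving_symm_measurableEquiv_toLp (Fin d)).symm
  rw [← mp.integral_comp (MeasurableEquiv.measurableEmbedding _)]
  rw [← MeasureTheory.integral_fintype_prod_eq_prod (ι := Fin d) f]
  rfl

lemma integrable_euclidean_prod (f : Fin d → ℝ → ℝ) (hf : ∀ i, Integrable (f i)) :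
    Integrable (fun w : EuclideanSpace ℝ (Fin d) => ∏ i, f i (w i)) := by
  have mp := (EuclideanSpace.volume_preserving_symm_measurableEquiv_toLp (Fin d)).symm
  rw [← mp.integrable_comp_emb (MeasurableEquiv.measurableEmbedding _)]
  have : Integrable (fun v : Fin d → ℝ => ∏ i, f i (v i)) := Integrable.fintype_prod hf
  exact this


/-- The d-dimensional standard (unnormalized) Gaussian moment machine. -/
lemma euclid_moment (c : Fin d → ℝ → ℝ) :
    ∫ w : EuclideanSpace ℝ (Fin d), (∏ k, c k (w k)) * Real.exp (-‖w‖ ^ 2 / 2)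
      = ∏ k, ∫ t : ℝ, c k t * g1 t := by
  rw [← integral_euclidean_prod (fun k t => c k t * g1 t)]
  congr 1 with w
  rw [exp_neg_norm_sq_div_eq_prod, ← Finset.prod_mul_distrib]
  rfl

lemma euclid_int_gauss :
    ∫ w : EuclideanSpace ℝ (Fin d), Real.exp (-‖w‖ ^ 2 / 2) = (∫ t : ℝ, g1 t) ^ d := by
  have := euclid_moment (d := d) (fun _ _ => 1)
  simpa using this

lemma euclid_int_gauss_pos :
    0 < ∫ w : EuclideanSpace ℝ (Fin d), Real.exp (-‖w‖ ^ 2 / 2) := by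
  rw [euclid_int_gauss]; exact pow_pos int_g1_pos d

lemma euclid_moment_one (i : Fin d) :
    ∫ w : EuclideanSpace ℝ (Fin d), w i * Real.exp (-‖w‖ ^ 2 / 2) = 0 := by
  have h := euclid_moment (d := d) (fun k t => if k = i then t else 1)
  have hw : ∀ w : EuclideanSpace ℝ (Fin d),
      (∏ k, (if k = i then w k else 1)) = w i := by
    intro w
    simp [Finset.prod_ite_eq' Finset.univ i (fun k => w k)]
  rw [show (fun w : EuclideanSpace ℝ (Fin d) => w i * Real.exp (-‖w‖ ^ 2 / 2))
      = fun w => (∏ k, (if k = i then w k else 1)) * Real.exp (-‖w‖ ^ 2 / 2) by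
    funext w; rw [hw w]] at *
  rw [h]
  apply Finset.prod_eq_zero (Finset.mem_univ i)
  simp [int_mul_g1]

lemma euclid_moment_two (i j : Fin d) :
    ∫ w : EuclideanSpace ℝ (Fin d), w i * w j * Real.exp (-‖w‖ ^ 2 / 2)
      = (if i = j then 1 else 0) * ∫ w : EuclideanSpace ℝ (Fin d), Real.exp (-‖w‖ ^ 2 / 2) := by
  have h := euclid_moment (d := d)
    (fun k t => (if k = i then t else 1) * (if k = j then t else 1))
  have hw : ∀ w : EuclideanSpace ℝ (Fin d),
      (∏ k, ((if k = i then w k else 1) * (if k = j then w k else 1))) = w i * w j := by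
    intro w
    rw [Finset.prod_mul_distrib]
    simp [Finset.prod_ite_eq' Finset.univ i (fun k => w k),
      Finset.prod_ite_eq' Finset.univ j (fun k => w k)]
  rw [show (fun w : EuclideanSpace ℝ (Fin d) => w i * w j * Real.exp (-‖w‖ ^ 2 / 2))
      = fun w => (∏ k, ((if k = i then w k else 1) * (if k = j then w k else 1)))
          * Real.exp (-‖w‖ ^ 2 / 2) by funext w; rw [hw w]]
  rw [h, euclid_int_gauss]
  by_cases hij : i = j
  · subst hij
    simp only [if_pos rfl, one_mul]
    have : ∀ k : Fin d, (∫ t : ℝ, (if k = i then t else 1) * (if k = i then t else 1) * g1 t)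
        = ∫ t : ℝ, g1 t := by
      intro k
      by_cases hk : k = i
      · simp only [if_pos hk]
        rw [show (fun t : ℝ => t * t * g1 t) = fun t => t ^ 2 * g1 t by funext t; ring_nf]
        exact int_sq_mul_g1
      · simp [if_neg hk]
    rw [Finset.prod_congr rfl (fun k _ => this k), Finset.prod_const]
    simp
  · rw [if_neg hij, zero_mul]
    apply Finset.prod_eq_zero (Finset.mem_univ i)
    simp only [if_pos rfl, if_neg hij]
    simpa using int_mul_g1

section Posterior

variable {d : ℕ} {q : EuclideanSpace ℝ (Fin d) → ℝ} {x : EuclideanSpace ℝ (Fin d)} {σ : ℝ}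

/-- The rescaled integrand. -/
noncomputable def rho (q : EuclideanSpace ℝ (Fin d) → ℝ) (x : EuclideanSpace ℝ (Fin d))
    (σ : ℝ) (w : EuclideanSpace ℝ (Fin d)) : ℝ :=
  q (x + σ • w) * Real.exp (-‖w‖ ^ 2 / 2)

lemma continuous_rho (hq : Continuous q) : Continuous (rho q x σ) := by
  unfold rho; fun_prop

lemma hcs_comp (hqc : HasCompactSupport q) (hσ : 0 < σ) :
    HasCompactSupport (fun w : EuclideanSpace ℝ (Fin d) => q (x + σ • w)) := by
  have h1 : HasCompactSupport (fun z : EuclideanSpace ℝ (Fin d) => q (x + z)) :=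
    hqc.comp_homeomorph (Homeomorph.addLeft x)
  exact h1.comp_smul hσ.ne'

lemma hcs_rho (hqc : HasCompactSupport q) (hσ : 0 < σ) :
    HasCompactSupport (rho q x σ) :=
  (hcs_comp (x := x) hqc hσ).mul_right

lemma integrable_mul_rho (hq : Continuous q) (hqc : HasCompactSupport q) (hσ : 0 < σ)
    (f : EuclideanSpace ℝ (Fin d) → ℝ) (hf : Continuous f) :
    Integrable (fun w => f w * rho q x σ w) := by
  apply Continuous.integrable_of_hasCompactSupport (by exact hf.mul (continuous_rho hq))
  exact ((hcs_rho hqc hσ).mul_left : HasCompactSupport (f * rho q x σ))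

lemma rho_integral_pos (hq : Continuous q) (hqc : HasCompactSupport q) (hq0 : ∀ z, 0 ≤ q z)
    (hx : 0 < q x) (hσ : 0 < σ) : 0 < ∫ w, rho q x σ w := by
  have hint : Integrable (rho q x σ) := by
    have := integrable_mul_rho (x := x) hq hqc hσ (fun _ => 1) continuous_const
    simpa using this
  have hnn : 0 ≤ rho q x σ := fun w => mul_nonneg (hq0 _) (Real.exp_pos _).le
  rw [integral_pos_iff_support_of_nonneg hnn hint]
  have hopen : IsOpen {w : EuclideanSpace ℝ (Fin d) | 0 < rho q x σ w} :=
    isOpen_lt continuous_const (continuous_rho hq)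
  have h0 : (0 : EuclideanSpace ℝ (Fin d)) ∈ {w | 0 < rho q x σ w} := by
    simp only [Set.mem_setOf_eq, rho, smul_zero, add_zero]
    positivity
  calc (0 : ENNReal) < volume {w : EuclideanSpace ℝ (Fin d) | 0 < rho q x σ w} :=
        hopen.measure_pos volume ⟨0, h0⟩
    _ ≤ volume (Function.support (rho q x σ)) := by
        apply measure_mono
        intro w hw
        exact ne_of_gt hw

lemma gauss_smul (hσ : 0 < σ) (w : EuclideanSpace ℝ (Fin d)) :
    gaussDensity d σ (x - (x + σ • w))
      = (2 * π * σ ^ 2) ^ (-(d : ℝ) / 2) * Real.exp (-‖w‖ ^ 2 / 2) := by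
  have h1 : x - (x + σ • w) = -(σ • w) := by abel
  rw [h1]
  unfold gaussDensity
  congr 1
  rw [norm_neg, norm_smul, Real.norm_eq_abs, abs_of_pos hσ]
  congr 1
  rw [mul_pow]
  field_simp

/-- Change of variables `z = x + σ • w`. -/
lemma change_of_var (hσ : 0 < σ) (h : EuclideanSpace ℝ (Fin d) → ℝ) :
    ∫ z, h z * (q z * gaussDensity d σ (x - z))
      = (σ ^ d * (2 * π * σ ^ 2) ^ (-(d : ℝ) / 2)) * ∫ w, h (x + σ • w) * rho q x σ w := by
  set F : EuclideanSpace ℝ (Fin d) → ℝ := fun z => h z * (q z * gaussDensity d σ (x - z))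
  have h1 : ∫ w, F (x + w) = ∫ z, F z := integral_add_left_eq_self F x
  have h2 : ∫ w, F (x + σ • w) = |((σ : ℝ) ^ d)⁻¹| • ∫ w, F (x + w) := by
    have := MeasureTheory.Measure.integral_comp_smul (μ := (volume : Measure (EuclideanSpace ℝ (Fin d))))
      (fun w => F (x + w)) σ
    simpa [finrank_euclideanSpace_fin] using this
  have h3 : |((σ : ℝ) ^ d)⁻¹| = (σ ^ d)⁻¹ := by
    rw [abs_of_pos]; positivity
  have h4 : ∫ w, F (x + σ • w)
      = (2 * π * σ ^ 2) ^ (-(d : ℝ) / 2) * ∫ w, h (x + σ • w) * rho q x σ w := by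
    rw [← MeasureTheory.integral_const_mul]
    congr 1 with w
    simp only [F, rho, gauss_smul (x := x) hσ w]
    ring
  rw [h3, smul_eq_mul] at h2
  have hd : (σ : ℝ) ^ d ≠ 0 := by positivity
  have h5 : ∫ w, F (x + w) = σ ^ d * ∫ w, F (x + σ • w) := by
    rw [h2]; field_simp
  rw [← h1, h5, h4]
  ring
end Posterior

section PosteriorFormula

variable {d : ℕ} {q : EuclideanSpace ℝ (Fin d) → ℝ} {x : EuclideanSpace ℝ (Fin d)} {σ : ℝ}

lemma integral_withDensity_ofReal {g : EuclideanSpace ℝ (Fin d) → ℝ}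
    (hg : Continuous g) (hg0 : ∀ z, 0 ≤ g z)
    (ν : Measure (EuclideanSpace ℝ (Fin d))) (f : EuclideanSpace ℝ (Fin d) → ℝ) :
    ∫ z, f z ∂(ν.withDensity fun z => ENNReal.ofReal (g z)) = ∫ z, g z * f z ∂ν := by
  have hm : Measurable (fun z => Real.toNNReal (g z)) := hg.measurable.real_toNNReal
  rw [show (fun z => ENNReal.ofReal (g z))
      = fun z => ((Real.toNNReal (g z) : ℝ≥0) : ℝ≥0∞) from rfl]
  rw [integral_withDensity_eq_integral_smul hm f]
  congr 1 with z
  simp [NNReal.smul_def, Real.coe_toNNReal _ (hg0 z)]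

lemma continuous_gauss (hσ : 0 < σ) :
    Continuous (fun z : EuclideanSpace ℝ (Fin d) => gaussDensity d σ (x - z)) := by
  unfold gaussDensity; fun_prop

lemma gauss_nonneg (hσ : 0 < σ) (y : EuclideanSpace ℝ (Fin d)) : 0 ≤ gaussDensity d σ y := by
  unfold gaussDensity
  have h1 : (0:ℝ) < 2 * π * σ ^ 2 := by positivity
  positivity

lemma posterior_integral (hq : Continuous q) (hqc : HasCompactSupport q) (hq0 : ∀ z, 0 ≤ q z)
    (hx : 0 < q x) (hσ : 0 < σ) (f : EuclideanSpace ℝ (Fin d) → ℝ) :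
    ∫ z, f z ∂(posterior (volume.withDensity fun z => ENNReal.ofReal (q z)) σ x)
      = (∫ w, rho q x σ w)⁻¹ * ∫ w, f (x + σ • w) * rho q x σ w := by
  set μ : Measure (EuclideanSpace ℝ (Fin d)) := volume.withDensity fun z => ENNReal.ofReal (q z)
    with hμdef
  set G : EuclideanSpace ℝ (Fin d) → ℝ := fun z => gaussDensity d σ (x - z) with hGdef
  set N : ℝ := ∫ w, rho q x σ w with hNdef
  set c : ℝ := σ ^ d * (2 * π * σ ^ 2) ^ (-(d : ℝ) / 2) with hcdef
  have hc : 0 < c := by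
    have h1 : (0:ℝ) < 2 * π * σ ^ 2 := by positivity
    have := Real.rpow_pos_of_pos h1 (-(d : ℝ) / 2)
    positivity
  have hN : 0 < N := rho_integral_pos hq hqc hq0 hx hσ
  have hGc : Continuous G := continuous_gauss hσ
  have hG0 : ∀ z, 0 ≤ G z := fun z => gauss_nonneg hσ _
  have hI : (∫ z, G z ∂μ) = c * N := by
    rw [hμdef, integral_withDensity_ofReal hq hq0]
    have := change_of_var (q := q) (x := x) hσ (fun _ => 1)
    simp only [one_mul] at this
    rw [this, hNdef]
  have hIpos : 0 < ∫ z, G z ∂μ := by rw [hI]; positivity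
  have key : ∀ g : EuclideanSpace ℝ (Fin d) → ℝ,
      ∫ z, g z ∂(μ.withDensity fun z => ENNReal.ofReal (G z))
        = c * ∫ w, g (x + σ • w) * rho q x σ w := by
    intro g
    rw [integral_withDensity_ofReal hGc hG0, hμdef, integral_withDensity_ofReal hq hq0]
    rw [show (fun z => q z * (G z * g z)) = fun z => g z * (q z * G z) by
      funext z; ring]
    exact change_of_var hσ g
  have hpost : posterior μ σ x
      = (ENNReal.ofReal (∫ z, G z ∂μ))⁻¹ • μ.withDensity fun z => ENNReal.ofReal (G z) := rfl
  rw [hpost, integral_smul_measure, key f]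
  rw [← ENNReal.ofReal_inv_of_pos hIpos, ENNReal.toReal_ofReal (by positivity), hI, smul_eq_mul]
  field_simp

end PosteriorFormula

section Moments

variable {d : ℕ} {q : EuclideanSpace ℝ (Fin d) → ℝ} {x : EuclideanSpace ℝ (Fin d)} {σ : ℝ}

lemma integrable_id_posterior (hq : Continuous q) (hqc : HasCompactSupport q)
    (hq0 : ∀ z, 0 ≤ q z) (hx : 0 < q x) (hσ : 0 < σ) :
    Integrable (fun z => z)
      (posterior (volume.withDensity fun z => ENNReal.ofReal (q z)) σ x) := by
  set μ : Measure (EuclideanSpace ℝ (Fin d)) := volume.withDensity fun z => ENNReal.ofReal (q z)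
    with hμdef
  set G : EuclideanSpace ℝ (Fin d) → ℝ := fun z => gaussDensity d σ (x - z) with hGdef
  have hGc : Continuous G := continuous_gauss hσ
  have hG0 : ∀ z, 0 ≤ G z := fun z => gauss_nonneg hσ _
  have hN : 0 < ∫ w, rho q x σ w := rho_integral_pos hq hqc hq0 hx hσ
  have hc : 0 < σ ^ d * (2 * π * σ ^ 2) ^ (-(d : ℝ) / 2) := by
    have h1 : (0:ℝ) < 2 * π * σ ^ 2 := by positivity
    have := Real.rpow_pos_of_pos h1 (-(d : ℝ) / 2)
    positivity
  have hI : (∫ z, G z ∂μ) = (σ ^ d * (2 * π * σ ^ 2) ^ (-(d : ℝ) / 2)) * ∫ w, rho q x σ w := by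
    rw [hμdef, integral_withDensity_ofReal hq hq0]
    have := change_of_var (q := q) (x := x) hσ (fun _ => 1)
    simpa only [one_mul] using this
  have hIpos : 0 < ∫ z, G z ∂μ := by rw [hI]; positivity
  have hpost : posterior μ σ x
      = (ENNReal.ofReal (∫ z, G z ∂μ))⁻¹ • μ.withDensity fun z => ENNReal.ofReal (G z) := rfl
  rw [hpost]
  have h1 : (ENNReal.ofReal (∫ z, G z ∂μ))⁻¹ ≠ 0 := by
    simp [ENNReal.inv_ne_zero]
  have h2 : (ENNReal.ofReal (∫ z, G z ∂μ))⁻¹ ≠ ⊤ := by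
    rw [ENNReal.inv_ne_top]
    simp [ENNReal.ofReal_pos.2 hIpos|>.ne']
  rw [integrable_smul_measure h1 h2]
  have hGm : Measurable (fun z => Real.toNNReal (G z)) := hGc.measurable.real_toNNReal
  have hqm : Measurable (fun z => Real.toNNReal (q z)) := hq.measurable.real_toNNReal
  rw [show (fun z => ENNReal.ofReal (G z))
      = fun z => ((Real.toNNReal (G z) : ℝ≥0) : ℝ≥0∞) from rfl]
  rw [integrable_withDensity_iff_integrable_smul hGm]
  rw [hμdef, show (fun z => ENNReal.ofReal (q z))
      = fun z => ((Real.toNNReal (q z) : ℝ≥0) : ℝ≥0∞) from rfl]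
  rw [integrable_withDensity_iff_integrable_smul hqm]
  have heq : (fun z : EuclideanSpace ℝ (Fin d) =>
      (Real.toNNReal (q z) : ℝ≥0) • (Real.toNNReal (G z) : ℝ≥0) • z)
      = fun z => (q z * G z) • z := by
    funext z
    rw [smul_smul, NNReal.smul_def]
    congr 1
    push_cast
    rw [Real.coe_toNNReal _ (hq0 z), Real.coe_toNNReal _ (hG0 z)]
  rw [heq]
  apply Continuous.integrable_of_hasCompactSupport
  · exact (hq.mul hGc).smul continuous_id
  · exact ((hqc.mul_right (f' := G)).smul_right
      : HasCompactSupport ((fun z => q z * G z) • fun z : EuclideanSpace ℝ (Fin d) => z))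

lemma continuous_coord (i : Fin d) : Continuous (fun w : EuclideanSpace ℝ (Fin d) => w i) :=
  (EuclideanSpace.proj (𝕜 := ℝ) i).continuous

lemma coord_add_smul (i : Fin d) (w : EuclideanSpace ℝ (Fin d)) :
    (x + σ • w) i = x i + σ * w i := rfl

lemma mean_coord (hq : Continuous q) (hqc : HasCompactSupport q)
    (hq0 : ∀ z, 0 ≤ q z) (hx : 0 < q x) (hσ : 0 < σ) (i : Fin d) :
    (∫ z, z ∂(posterior (volume.withDensity fun z => ENNReal.ofReal (q z)) σ x)) i
      = x i + σ * ((∫ w, w i * rho q x σ w) / (∫ w, rho q x σ w)) := by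
  set ν := posterior (volume.withDensity fun z => ENNReal.ofReal (q z)) σ x with hν
  set N : ℝ := ∫ w, rho q x σ w with hNdef
  set A : ℝ := ∫ w, w i * rho q x σ w with hAdef
  have hN : 0 < N := rho_integral_pos hq hqc hq0 hx hσ
  have hint := integrable_id_posterior hq hqc hq0 hx hσ
  have h1 : (∫ z, z ∂ν) i = ∫ z, z i ∂ν := by
    have := (EuclideanSpace.proj (𝕜 := ℝ) i).integral_comp_comm hint
    exact this.symm
  have h2 : ∫ z, z i ∂ν = N⁻¹ * ∫ w, (x + σ • w) i * rho q x σ w :=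
    posterior_integral hq hqc hq0 hx hσ _
  have h3 : ∫ w, (x + σ • w) i * rho q x σ w = x i * N + σ * A := by
    rw [show (fun w => (x + σ • w) i * rho q x σ w)
        = fun w => x i * rho q x σ w + σ * (w i * rho q x σ w) by
      funext w; rw [coord_add_smul]; ring]
    rw [integral_add (by simpa using integrable_mul_rho hq hqc hσ (fun _ => x i) continuous_const)
      ((integrable_mul_rho hq hqc hσ (fun w => w i) (continuous_coord i)).const_mul σ)]
    rw [MeasureTheory.integral_const_mul, MeasureTheory.integral_const_mul, hNdef, hAdef]
  rw [h1, h2, h3]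
  field_simp

lemma cov_entry (hq : Continuous q) (hqc : HasCompactSupport q)
    (hq0 : ∀ z, 0 ≤ q z) (hx : 0 < q x) (hσ : 0 < σ) (i j : Fin d) (mi mj : ℝ)
    (hmi : mi = x i + σ * ((∫ w, w i * rho q x σ w) / (∫ w, rho q x σ w)))
    (hmj : mj = x j + σ * ((∫ w, w j * rho q x σ w) / (∫ w, rho q x σ w))) :
    (σ ^ 2)⁻¹ * ∫ z, (z i - mi) * (z j - mj)
        ∂(posterior (volume.withDensity fun z => ENNReal.ofReal (q z)) σ x)
      = (∫ w, w i * w j * rho q x σ w) / (∫ w, rho q x σ w)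
        - ((∫ w, w i * rho q x σ w) / (∫ w, rho q x σ w))
          * ((∫ w, w j * rho q x σ w) / (∫ w, rho q x σ w)) := by
  set N : ℝ := ∫ w, rho q x σ w with hNdef
  set Ai : ℝ := ∫ w, w i * rho q x σ w with hAidef
  set Aj : ℝ := ∫ w, w j * rho q x σ w with hAjdef
  set B : ℝ := ∫ w, w i * w j * rho q x σ w with hBdef
  have hN : 0 < N := rho_integral_pos hq hqc hq0 hx hσ
  have h2 : ∫ z, (z i - mi) * (z j - mj)
        ∂(posterior (volume.withDensity fun z => ENNReal.ofReal (q z)) σ x)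
      = N⁻¹ * ∫ w, ((x + σ • w) i - mi) * ((x + σ • w) j - mj) * rho q x σ w :=
    posterior_integral hq hqc hq0 hx hσ _
  have h3 : ∫ w, ((x + σ • w) i - mi) * ((x + σ • w) j - mj) * rho q x σ w
      = σ ^ 2 * ∫ w, (w i - Ai / N) * (w j - Aj / N) * rho q x σ w := by
    rw [← MeasureTheory.integral_const_mul]
    congr 1 with w
    rw [coord_add_smul, coord_add_smul, hmi, hmj]
    ring
  have h4 : ∫ w, (w i - Ai / N) * (w j - Aj / N) * rho q x σ w
      = B - (Ai / N) * Aj - (Aj / N) * Ai + ((Ai / N) * (Aj / N)) * N := by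
    have hBint : Integrable (fun w => w i * w j * rho q x σ w) :=
      integrable_mul_rho hq hqc hσ _ ((continuous_coord i).mul (continuous_coord j))
    have hAiint : Integrable (fun w => w i * rho q x σ w) :=
      integrable_mul_rho hq hqc hσ _ (continuous_coord i)
    have hAjint : Integrable (fun w => w j * rho q x σ w) :=
      integrable_mul_rho hq hqc hσ _ (continuous_coord j)
    have hNint : Integrable (rho q x σ) := by
      simpa using integrable_mul_rho (x := x) hq hqc hσ (fun _ => 1) continuous_const
    have i1 : Integrable (fun w => w i * w j * rho q x σ w
        - (Ai / N) * (w j * rho q x σ w)) := hBint.sub (hAjint.const_mul _)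
    have i2 : Integrable (fun w => (w i * w j * rho q x σ w
        - (Ai / N) * (w j * rho q x σ w)) - (Aj / N) * (w i * rho q x σ w)) :=
      i1.sub (hAiint.const_mul _)
    have i3 : Integrable (fun w => ((Ai / N) * (Aj / N)) * rho q x σ w) := hNint.const_mul _
    rw [show (fun w => (w i - Ai / N) * (w j - Aj / N) * rho q x σ w)
        = fun w => ((w i * w j * rho q x σ w - (Ai / N) * (w j * rho q x σ w))
            - (Aj / N) * (w i * rho q x σ w)) + ((Ai / N) * (Aj / N)) * rho q x σ w by
      funext w; ring]
    rw [integral_add i2 i3, integral_sub i1 (hAiint.const_mul _),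
      integral_sub hBint (hAjint.const_mul _)]
    rw [MeasureTheory.integral_const_mul, MeasureTheory.integral_const_mul,
      MeasureTheory.integral_const_mul]
  rw [h2, h3, h4]
  field_simp
  ring

end Moments

section Limits

variable {d : ℕ} {q : EuclideanSpace ℝ (Fin d) → ℝ} {x : EuclideanSpace ℝ (Fin d)}

lemma abs_coord_le_norm (w : EuclideanSpace ℝ (Fin d)) (i : Fin d) : |w i| ≤ ‖w‖ := by
  rw [EuclideanSpace.norm_eq, ← Real.sqrt_sq_eq_abs]
  apply Real.sqrt_le_sqrt
  have h := Finset.single_le_sum (f := fun k => ‖w k‖ ^ 2)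
    (fun k _ => by positivity) (Finset.mem_univ i)
  simpa [sq_abs] using h

lemma integrable_bound_quarter :
    Integrable (fun w : EuclideanSpace ℝ (Fin d) => Real.exp (-‖w‖ ^ 2 / 4)) := by
  have h := integrable_euclidean_prod (fun _ : Fin d => fun t : ℝ => Real.exp (-t ^ 2 / 4))
    (fun _ => integrable_exp_neg_sq_quarter)
  apply h.congr
  filter_upwards with w
  rw [exp_neg_norm_sq_div_eq_prod]

lemma tendsto_rho_integral (hq : Continuous q) (hqc : HasCompactSupport q)
    (f : EuclideanSpace ℝ (Fin d) → ℝ) (hf : Continuous f) (C : ℝ)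
    (hbound : ∀ w, |f w| ≤ C * Real.exp (‖w‖ ^ 2 / 4)) :
    Tendsto (fun σ => ∫ w, f w * rho q x σ w) (nhdsWithin 0 (Set.Ioi 0))
      (nhds (q x * ∫ w, f w * Real.exp (-‖w‖ ^ 2 / 2))) := by
  obtain ⟨Cq, hCq⟩ := hqc.exists_bound_of_continuous hq
  have hCq0 : 0 ≤ Cq := le_trans (norm_nonneg _) (hCq x)
  have hC0 : 0 ≤ C := le_trans (abs_nonneg (f 0)) (by simpa using hbound 0)
  have h := tendsto_integral_filter_of_dominated_convergence
    (F := fun σ w => f w * rho q x σ w)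
    (f := fun w => f w * (q x * Real.exp (-‖w‖ ^ 2 / 2)))
    (bound := fun w => (C * Cq) * Real.exp (-‖w‖ ^ 2 / 4))
    (μ := volume) (l := nhdsWithin (0:ℝ) (Set.Ioi 0))
    (Eventually.of_forall fun σ => (hf.mul (continuous_rho hq)).aestronglyMeasurable)
    (by
      filter_upwards with σ
      filter_upwards with w
      rw [Real.norm_eq_abs, abs_mul]
      unfold rho
      rw [abs_mul, abs_of_nonneg (Real.exp_pos _).le]
      have h1 : |f w| ≤ C * Real.exp (‖w‖ ^ 2 / 4) := hbound w
      have h2 : |q (x + σ • w)| ≤ Cq := by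
        have := hCq (x + σ • w); rwa [Real.norm_eq_abs] at this
      calc |f w| * (|q (x + σ • w)| * Real.exp (-‖w‖ ^ 2 / 2))
          ≤ (C * Real.exp (‖w‖ ^ 2 / 4)) * (Cq * Real.exp (-‖w‖ ^ 2 / 2)) := by
            apply mul_le_mul h1 (mul_le_mul_of_nonneg_right h2 (Real.exp_pos _).le)
              (by positivity) (mul_nonneg hC0 (Real.exp_pos _).le)
        _ = (C * Cq) * Real.exp (-‖w‖ ^ 2 / 4) := by
            rw [mul_mul_mul_comm, ← Real.exp_add]; ring_nf)
    (integrable_bound_quarter.const_mul _)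
    (by
      filter_upwards with w
      have hc : Continuous (fun σ : ℝ => x + σ • w) := by continuity
      have h1 : Tendsto (fun σ : ℝ => q (x + σ • w)) (nhds 0) (nhds (q x)) := by
        have := (hq.comp hc).tendsto 0
        simpa [Function.comp_def] using this
      have h2 : Tendsto (fun σ : ℝ => q (x + σ • w)) (nhdsWithin 0 (Set.Ioi 0)) (nhds (q x)) :=
        h1.mono_left nhdsWithin_le_nhds
      exact ((h2.mul tendsto_const_nhds).const_mul (f w)))
  convert h using 2
  rw [← MeasureTheory.integral_const_mul]
  congr 1 with w
  ring

end Limits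

end PostCov

open PostCov

/-- **Rescaled posterior covariance tends to the identity.** Let `μ` be a probability
measure on `ℝ^d` with smooth compactly supported density `q` and let `x` satisfy `q(x) > 0`.
Let `Σ_σ(x)` be the covariance matrix of the posterior `ν_{σ,x}` (with mean `m_σ(x)`).
Then `σ^{-2} Σ_σ(x) → I_d` as `σ → 0⁺`. -/
theorem rescaled_posterior_covariance_tendsto_id {d : ℕ}
    (μ : Measure (EuclideanSpace ℝ (Fin d))) [IsProbabilityMeasure μ]
    (q : EuclideanSpace ℝ (Fin d) → ℝ) (hq : ContDiff ℝ (⊤ : ℕ∞) q)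
    (hqc : HasCompactSupport q) (hq0 : ∀ z, 0 ≤ q z)
    (hμ : μ = volume.withDensity fun z => ENNReal.ofReal (q z))
    (x : EuclideanSpace ℝ (Fin d)) (hx : 0 < q x)
    (m : ℝ → EuclideanSpace ℝ (Fin d))
    (hm : ∀ σ, m σ = ∫ z, z ∂(posterior μ σ x))
    (S : ℝ → Matrix (Fin d) (Fin d) ℝ)
    (hS : ∀ σ, S σ = Matrix.of fun i j =>
        ∫ z, (z i - m σ i) * (z j - m σ j) ∂(posterior μ σ x)) :
    Tendsto (fun σ : ℝ => (σ ^ 2)⁻¹ • S σ) (nhdsWithin 0 (Set.Ioi 0))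
      (nhds (1 : Matrix (Fin d) (Fin d) ℝ)) := by
  subst hμ
  have hq' : Continuous q := hq.continuous
  set Gd : ℝ := ∫ w : EuclideanSpace ℝ (Fin d), Real.exp (-‖w‖ ^ 2 / 2) with hGddef
  have hGd : 0 < Gd := euclid_int_gauss_pos
  -- limits of the three integral families
  have hNlim : Tendsto (fun σ => ∫ w, rho q x σ w) (nhdsWithin 0 (Set.Ioi 0))
      (nhds (q x * Gd)) := by
    have := tendsto_rho_integral (x := x) hq' hqc (fun _ => 1) continuous_const 1
      (fun w => by
        simp only [abs_one, one_mul]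
        exact Real.one_le_exp (by positivity))
    simpa using this
  have hAlim : ∀ i, Tendsto (fun σ => ∫ w, w i * rho q x σ w) (nhdsWithin 0 (Set.Ioi 0))
      (nhds 0) := by
    intro i
    have := tendsto_rho_integral (x := x) hq' hqc (fun w => w i) (continuous_coord i) 1
      (fun w => by
        calc |w i| ≤ ‖w‖ := abs_coord_le_norm w i
          _ ≤ Real.exp (‖w‖ ^ 2 / 4) := by
              have := abs_le_exp_quarter ‖w‖
              rwa [abs_of_nonneg (norm_nonneg w)] at this
          _ = 1 * Real.exp (‖w‖ ^ 2 / 4) := (one_mul _).symm)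
    rwa [euclid_moment_one i, mul_zero] at this
  have hBlim : ∀ i j, Tendsto (fun σ => ∫ w, w i * w j * rho q x σ w)
      (nhdsWithin 0 (Set.Ioi 0)) (nhds (q x * ((if i = j then (1:ℝ) else 0) * Gd))) := by
    intro i j
    have := tendsto_rho_integral (x := x) hq' hqc (fun w => w i * w j)
      ((continuous_coord i).mul (continuous_coord j)) 4
      (fun w => by
        calc |w i * w j| = |w i| * |w j| := abs_mul _ _
          _ ≤ ‖w‖ * ‖w‖ :=
              mul_le_mul (abs_coord_le_norm w i) (abs_coord_le_norm w j)
                (abs_nonneg _) (norm_nonneg _)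
          _ = ‖w‖ ^ 2 := (sq ‖w‖).symm
          _ ≤ 4 * Real.exp (‖w‖ ^ 2 / 4) := exp_quarter_bound _)
    rwa [euclid_moment_two i j, ← hGddef] at this
  -- entrywise convergence
  have hmain : ∀ i j, Tendsto (fun σ : ℝ => ((σ ^ 2)⁻¹ • S σ) i j)
      (nhdsWithin 0 (Set.Ioi 0)) (nhds (if i = j then (1:ℝ) else 0)) := by
    intro i j
    have hne : q x * Gd ≠ 0 := by positivity
    have hT : Tendsto (fun σ => (∫ w, w i * w j * rho q x σ w) / (∫ w, rho q x σ w)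
          - ((∫ w, w i * rho q x σ w) / (∫ w, rho q x σ w))
            * ((∫ w, w j * rho q x σ w) / (∫ w, rho q x σ w)))
        (nhdsWithin 0 (Set.Ioi 0))
        (nhds ((q x * ((if i = j then (1:ℝ) else 0) * Gd)) / (q x * Gd)
          - (0 / (q x * Gd)) * (0 / (q x * Gd)))) :=
      (((hBlim i j).div hNlim hne).sub
        (((hAlim i).div hNlim hne).mul ((hAlim j).div hNlim hne)))
    have hval : (q x * ((if i = j then (1:ℝ) else 0) * Gd)) / (q x * Gd)
        - (0 / (q x * Gd)) * (0 / (q x * Gd)) = if i = j then (1:ℝ) else 0 := by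
      by_cases h : i = j <;> simp [h, hne]
    rw [hval] at hT
    apply hT.congr'
    filter_upwards [self_mem_nhdsWithin] with σ hσ
    have hσ' : 0 < σ := hσ
    have hmean : ∀ k, m σ k = x k
        + σ * ((∫ w, w k * rho q x σ w) / (∫ w, rho q x σ w)) := by
      intro k
      rw [hm σ]
      exact mean_coord hq' hqc hq0 hx hσ' k
    have hcov := cov_entry hq' hqc hq0 hx hσ' i j (m σ i) (m σ j) (hmean i) (hmean j)
    rw [Matrix.smul_apply, smul_eq_mul, hS σ, Matrix.of_apply]
    exact hcov.symm ▸ rfl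
  rw [show (1 : Matrix (Fin d) (Fin d) ℝ) = fun i j => if i = j then (1:ℝ) else 0 by
    funext i j
    rw [Matrix.one_apply]]
  refine tendsto_pi_nhds.2 ?_
  intro i
  rw [tendsto_pi_nhds]
  intro j
  exact hmain i j
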